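/- arXiv:1304.2077 — 3 statements merged into one kernel-verified Lean document; each statement's English description precedes it below -/
import Mathlib

section
/- For every x ∈ ℝ^d, the inner product of the gradient of the symmetric softmax with x satisfies ⟨∇lmax(x), x⟩ ≥ lmax(x) − log(2d). -/
/-- `linf x` is the maximum absolute entry of the vector `x`, i.e. `‖x‖_∞`. -/
noncomputable def linf {ι : Type*} [Fintype ι] (x : ι → ℝ) : ℝ := ⨆ i, |x i|

/-- `l1 x` is the sum of absolute entries of the vector `x`, i.e. `‖x‖₁`. -/
def l1 {ι : Type*} [Fintype ι] (x : ι → ℝ) : ℝ := ∑ i, |x i|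

/-- The symmetric softmax: `lmax(x) = log (Σ_i (e^{x_i} + e^{-x_i}))`. -/
noncomputable def lmax {ι : Type*} [Fintype ι] (x : ι → ℝ) : ℝ :=
  Real.log (∑ i, (Real.exp (x i) + Real.exp (-x i)))

/-- The gradient of the symmetric softmax: its `i`-th component is
`(e^{x_i} − e^{-x_i}) / Σ_j (e^{x_j} + e^{-x_j})`. -/
noncomputable def lmaxGrad {ι : Type*} [Fintype ι] (x : ι → ℝ) : ι → ℝ :=
  fun i => (Real.exp (x i) - Real.exp (-x i)) / ∑ j, (Real.exp (x j) + Real.exp (-x j))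

/-!
Split each coordinate into the two exponents `x i` and `-x i`. Then `lmax x` is the log-sum-exp
of these `2d` numbers and `⟨∇lmax x, x⟩` is their average under the softmax distribution `p`,
so `lmax x - ⟨∇lmax x, x⟩ = -∑ p log p` is the entropy of `p`, which is at most `log (2d)`
(Gibbs' inequality against the uniform distribution, from `log t ≤ t - 1`).
-/

open Real Finset

noncomputable def softmax {κ : Type*} [Fintype κ] (y : κ → ℝ) (j : κ) : ℝ :=
  exp (y j) / ∑ k, exp (y k)

lemma sum_softmax {κ : Type*} [Fintype κ] [Nonempty κ] (y : κ → ℝ) :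
    ∑ j, softmax y j = 1 := by
  simp only [softmax]
  rw [← sum_div, div_self (sum_pos (fun j _ ↦ exp_pos (y j)) univ_nonempty).ne']

theorem log_sum_exp_sub_log_card_le {κ : Type*} [Fintype κ] (y : κ → ℝ) :
    log (∑ j, exp (y j)) - log (Fintype.card κ) ≤ ∑ j, softmax y j * y j := by
  cases isEmpty_or_nonempty κ
  · simp
  set S := ∑ j, exp (y j)
  set n : ℝ := (Fintype.card κ : ℝ)
  have hS : 0 < S := sum_pos (fun j _ ↦ exp_pos (y j)) univ_nonempty
  have hn : 0 < n := by positivity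
  have hterm : ∀ j, softmax y j * (log S - log n - y j) ≤ 1 / n - softmax y j := by
    intro j
    have hp : softmax y j = exp (y j) / S := rfl
    have hj : log S - log n - y j = log (S / (n * exp (y j))) := by
      rw [log_div hS.ne' (by positivity), log_mul hn.ne' (exp_pos _).ne', log_exp]; ring
    calc softmax y j * (log S - log n - y j)
        ≤ softmax y j * (S / (n * exp (y j)) - 1) := by
          rw [hj]
          exact mul_le_mul_of_nonneg_left (log_le_sub_one_of_pos (by positivity))
            (by rw [hp]; positivity)
      _ = 1 / n - softmax y j := by rw [hp]; field_simp
  have hsum := sum_le_sum fun j (_ : j ∈ univ) ↦ hterm j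
  simp only [mul_sub, sum_sub_distrib, ← sum_mul, sum_softmax, sum_const, card_univ,
    nsmul_eq_mul] at hsum
  rw [mul_one_div_cancel hn.ne'] at hsum
  linarith

lemma lmax_eq_log_sum_exp {ι : Type*} [Fintype ι] (x : ι → ℝ) :
    lmax x = log (∑ j, exp (Sum.elim x (-x) j)) := by
  simp [lmax, Fintype.sum_sum_type, sum_add_distrib]

lemma sum_lmaxGrad_mul_eq_sum_softmax_mul {ι : Type*} [Fintype ι] (x : ι → ℝ) :
    ∑ i, lmaxGrad x i * x i = ∑ j, softmax (Sum.elim x (-x)) j * Sum.elim x (-x) j := by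
  simp only [lmaxGrad, softmax, Fintype.sum_sum_type, Sum.elim_inl, Sum.elim_inr, Pi.neg_apply,
    ← sum_add_distrib]
  refine sum_congr rfl fun i _ ↦ ?_
  ring

theorem lmaxGrad_inner_ge_general {d : ℕ} (x : Fin d → ℝ) :
    lmax x - Real.log (2 * d) ≤ ∑ i, lmaxGrad x i * x i := by
  have hcard : (Fintype.card (Fin d ⊕ Fin d) : ℝ) = 2 * d := by simp; ring
  rw [lmax_eq_log_sum_exp, sum_lmaxGrad_mul_eq_sum_softmax_mul, ← hcard]
  exact log_sum_exp_sub_log_card_le _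

/-- `⟨∇lmax(x), x⟩ ≥ lmax(x) − log (2d)`. -/
theorem lmaxGrad_inner_ge {d : ℕ} (hd : 1 ≤ d) (x : Fin d → ℝ) :
    lmax x - Real.log (2 * d) ≤ ∑ i, lmaxGrad x i * x i :=
  lmaxGrad_inner_ge_general x
end

section
/- Second-order upper bound for the symmetric softmax: for all x, y ∈ ℝ^d, lmax(y) ≤ lmax(x) + ⟨∇lmax(x), y − x⟩ + (1/2)·‖y − x‖_∞². -/
open Real Finset Set

theorem image_le_of_deriv2_le {f f' f'' : ℝ → ℝ} {C : ℝ}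
    (hf : ∀ t, HasDerivAt f (f' t) t) (hf' : ∀ t, HasDerivAt f' (f'' t) t)
    (hC : ∀ t, f'' t ≤ C) {a b : ℝ} (hab : a ≤ b) :
    f b ≤ f a + f' a * (b - a) + C / 2 * (b - a) ^ 2 := by
  set g : ℝ → ℝ := fun t => f t - f' a * t - C / 2 * (t - a) ^ 2
  set g' : ℝ → ℝ := fun t => f' t - f' a - C * (t - a)
  have hline : ∀ t, HasDerivAt (fun s => s - a) 1 t := fun t => (hasDerivAt_id' t).sub_const a
  have hg : ∀ t, HasDerivAt g (g' t) t := fun t => by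
    refine (((hf t).fun_sub ((hasDerivAt_id' t).const_mul (f' a))).fun_sub
      (((hline t).fun_pow 2).const_mul (C / 2))).congr_deriv ?_
    simp only [g']
    ring
  have hg' : ∀ t, HasDerivAt g' (f'' t - C) t := fun t => by
    refine (((hf' t).sub_const (f' a)).fun_sub ((hline t).const_mul C)).congr_deriv ?_
    ring
  have hg'_anti : Antitone g' :=
    antitone_of_hasDerivAt_nonpos hg' fun t => sub_nonpos.2 (hC t)
  have hg_anti : AntitoneOn g (Ici a) :=
    antitoneOn_of_hasDerivWithinAt_nonpos (convex_Ici a)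
      (fun t _ => (hg t).continuousAt.continuousWithinAt) (fun t _ => (hg t).hasDerivWithinAt)
      (fun t ht => by
        rw [interior_Ici] at ht
        simpa [g'] using hg'_anti (le_of_lt ht))
  have hgb := hg_anti self_mem_Ici hab hab
  simp only [g] at hgb
  linarith

theorem log_image_le_of_deriv2_le_mul {G G' G'' : ℝ → ℝ} {C : ℝ} (hpos : ∀ t, 0 < G t)
    (hG : ∀ t, HasDerivAt G (G' t) t) (hG' : ∀ t, HasDerivAt G' (G'' t) t)
    (hC : ∀ t, G'' t ≤ C * G t) {a b : ℝ} (hab : a ≤ b) :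
    log (G b) ≤ log (G a) + G' a / G a * (b - a) + C / 2 * (b - a) ^ 2 := by
  refine image_le_of_deriv2_le (fun t => (hG t).log (hpos t).ne')
    (fun t => (hG' t).div (hG t) (hpos t).ne') (fun t => ?_) hab
  rw [div_le_iff₀ (pow_pos (hpos t) 2)]
  nlinarith [hC t, hpos t, mul_self_nonneg (G' t)]

section SymmetricSoftmax

variable {ι : Type*} [Fintype ι]

theorem hasDerivAt_sum_cosh_line (x u : ι → ℝ) (t : ℝ) :
    HasDerivAt (fun t => ∑ i, cosh (x i + t * u i)) (∑ i, sinh (x i + t * u i) * u i) t :=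
  HasDerivAt.fun_sum fun i _ => by
    simpa using (((hasDerivAt_id t).mul_const (u i)).const_add (x i)).cosh

theorem hasDerivAt_sum_sinh_line_mul (x u : ι → ℝ) (t : ℝ) :
    HasDerivAt (fun t => ∑ i, sinh (x i + t * u i) * u i)
      (∑ i, cosh (x i + t * u i) * u i * u i) t :=
  HasDerivAt.fun_sum fun i _ => by
    simpa using ((((hasDerivAt_id t).mul_const (u i)).const_add (x i)).sinh).mul_const (u i)

theorem sum_exp_add_exp_neg (x : ι → ℝ) :
    ∑ i, (exp (x i) + exp (-x i)) = 2 * ∑ i, cosh (x i) := by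
  simp only [mul_sum, cosh_eq]
  ring_nf

theorem lmax_eq_log_two_add [Nonempty ι] (x : ι → ℝ) :
    lmax x = log 2 + log (∑ i, cosh (x i)) := by
  rw [lmax, sum_exp_add_exp_neg,
    log_mul two_ne_zero (sum_pos (fun i _ => cosh_pos (x i)) univ_nonempty).ne']

theorem sum_lmaxGrad_mul (x u : ι → ℝ) :
    ∑ i, lmaxGrad x i * u i = (∑ i, sinh (x i) * u i) / ∑ i, cosh (x i) := by
  simp only [lmaxGrad, sum_exp_add_exp_neg, sum_div, sinh_eq]
  refine sum_congr rfl fun i _ => ?_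
  field_simp

theorem lmax_add_le [Nonempty ι] (x u : ι → ℝ) {M : ℝ} (hM : ∀ i, |u i| ≤ M) :
    lmax (x + u) ≤ lmax x + ∑ i, lmaxGrad x i * u i + M ^ 2 / 2 := by
  have hG'' : ∀ t, ∑ i, cosh (x i + t * u i) * u i * u i ≤ M ^ 2 * ∑ i, cosh (x i + t * u i) := by
    intro t
    rw [mul_sum]
    refine sum_le_sum fun i _ => ?_
    have hu : u i * u i ≤ M ^ 2 := by
      rw [← abs_mul_abs_self, sq]
      exact mul_self_le_mul_self (abs_nonneg _) (hM i)
    nlinarith [cosh_pos (x i + t * u i)]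
  have key := log_image_le_of_deriv2_le_mul
    (fun t => sum_pos (fun i _ => cosh_pos (x i + t * u i)) univ_nonempty)
    (hasDerivAt_sum_cosh_line x u) (hasDerivAt_sum_sinh_line_mul x u) hG'' zero_le_one
  simp only [zero_mul, add_zero, one_mul, sub_zero, mul_one, one_pow] at key
  rw [lmax_eq_log_two_add, lmax_eq_log_two_add, sum_lmaxGrad_mul]
  simp only [Pi.add_apply]
  linarith

end SymmetricSoftmax

/-- Second-order upper bound for the symmetric softmax:
`lmax(y) ≤ lmax(x) + ⟨∇lmax(x), y − x⟩ + (1/2)·‖y − x‖_∞²`. -/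
theorem lmax_second_order {d : ℕ} (hd : 1 ≤ d) (x y : Fin d → ℝ) :
    lmax y ≤ lmax x + (∑ i, lmaxGrad x i * (y i - x i))
      + (1 / 2) * (linf (fun i => y i - x i)) ^ 2 := by
  have : Nonempty (Fin d) := ⟨⟨0, hd⟩⟩
  have hM : ∀ i, |y i - x i| ≤ linf (fun i => y i - x i) :=
    fun i => le_ciSup (f := fun i => |y i - x i|) (finite_range _).bddAbove i
  have h := lmax_add_le x (fun i => y i - x i) hM
  rw [show x + (fun i => y i - x i) = y by ext i; simp] at h
  linarith
end

section
/- Slack lemma: let R be an α-congestion-approximator for (B, C), let b lie in the column space of B, let ε > 0, and let f ∈ ℝ^E satisfy ‖C⁻¹ f‖_∞ + 2α·‖R(b − B f)‖_∞ ≤ (1 + ε)·opt(b). Then ‖R(b − B f)‖_∞ ≤ ε·‖R b‖_∞. -/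
open Matrix

/-- `opt B c b` is the minimum congestion `‖C⁻¹ f‖_∞` over flows `f` with `B f = b`,
where `C` is the diagonal matrix of capacities `c`. -/
noncomputable def opt {V E : Type*} [Fintype V] [Fintype E]
    (B : Matrix V E ℝ) (c : E → ℝ) (b : V → ℝ) : ℝ :=
  sInf {t : ℝ | ∃ f : E → ℝ, B.mulVec f = b ∧ t = linf fun e => f e / c e}

/-- `R` is an `α`-congestion-approximator for `(B, C)`:
`‖R b‖_∞ ≤ opt(b) ≤ α · ‖R b‖_∞` for every `b` in the column space of `B`. -/
def IsCongestionApprox {V E W : Type*} [Fintype V] [Fintype E] [Fintype W]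
    (B : Matrix V E ℝ) (c : E → ℝ) (α : ℝ) (R : Matrix W V ℝ) : Prop :=
  ∀ b : V → ℝ, (∃ f : E → ℝ, B.mulVec f = b) →
    linf (R.mulVec b) ≤ opt B c b ∧ opt B c b ≤ α * linf (R.mulVec b)

lemma linf_le_entry {ι : Type*} [Fintype ι] (x : ι → ℝ) (i : ι) : |x i| ≤ linf x := by
  unfold linf
  exact le_ciSup (f := fun i => |x i|) (Set.Finite.bddAbove (Set.finite_range _)) i

lemma linf_nonneg' {ι : Type*} [Fintype ι] (x : ι → ℝ) : 0 ≤ linf x :=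
  Real.iSup_nonneg fun i => abs_nonneg _

lemma linf_add {ι : Type*} [Fintype ι] [Nonempty ι] (x y : ι → ℝ) :
    linf (fun i => x i + y i) ≤ linf x + linf y := by
  unfold linf
  refine ciSup_le fun i => (abs_add_le _ _).trans ?_
  exact add_le_add (linf_le_entry x i) (linf_le_entry y i)

/-- Slack lemma: if `‖C⁻¹ f‖_∞ + 2α·‖R(b − B f)‖_∞ ≤ (1 + ε)·opt(b)`, then
`‖R(b − B f)‖_∞ ≤ ε·‖R b‖_∞`. -/
theorem slack_lemma {V E W : Type*} [Fintype V] [Fintype E] [Fintype W]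
    [Nonempty V] [Nonempty E]
    (B : Matrix V E ℝ) (c : E → ℝ) (hc : ∀ e, 0 < c e)
    (α : ℝ) (hα : 1 ≤ α) (R : Matrix W V ℝ)
    (hR : IsCongestionApprox B c α R)
    (b : V → ℝ) (hb : ∃ f : E → ℝ, B.mulVec f = b)
    (ε : ℝ) (hε : 0 < ε)
    (f : E → ℝ)
    (hf : linf (fun e => f e / c e) + 2 * α * linf (R.mulVec (b - B.mulVec f)) ≤
      (1 + ε) * opt B c b) :
    linf (R.mulVec (b - B.mulVec f)) ≤ ε * linf (R.mulVec b) := by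
  obtain ⟨f₀, hf₀⟩ := hb
  have hmem : ∃ g : E → ℝ, B.mulVec g = b - B.mulVec f :=
    ⟨f₀ - f, by rw [mulVec_sub, hf₀]⟩
  have hbdd : ∀ b' : V → ℝ,
      BddBelow {t : ℝ | ∃ g : E → ℝ, B.mulVec g = b' ∧ t = linf fun e => g e / c e} := by
    intro b'
    exact ⟨0, fun t ⟨g, _, ht⟩ => ht ▸ linf_nonneg' _⟩
  -- subadditivity: opt b ≤ opt (b - Bf) + linf (f/c)
  have hsub : opt B c b ≤ opt B c (b - B.mulVec f) + linf (fun e => f e / c e) := by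
    rw [← sub_le_iff_le_add]
    show _ ≤ sInf {t : ℝ | ∃ g : E → ℝ, B.mulVec g = b - B.mulVec f ∧ t = linf fun e => g e / c e}
    refine le_csInf ?_ ?_
    · obtain ⟨g, hg⟩ := hmem
      exact ⟨_, g, hg, rfl⟩
    rintro t ⟨g, hg, rfl⟩
    rw [sub_le_iff_le_add]
    have h1 : opt B c b ≤ linf fun e => (g e + f e) / c e := by
      apply csInf_le (hbdd b)
      exact ⟨g + f, by rw [mulVec_add, hg, sub_add_cancel], rfl⟩
    refine h1.trans ?_
    have : (fun e => (g e + f e) / c e) = fun e => g e / c e + f e / c e := by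
      funext e; rw [add_div]
    rw [this]
    exact linf_add _ _
  have h2 := hR b ⟨f₀, hf₀⟩
  have h3 := (hR (b - B.mulVec f) hmem).2
  have hαpos : (0 : ℝ) < α := lt_of_lt_of_le one_pos hα
  -- from hsub and hf: α * r ≤ ε * opt b ≤ ε * α * ‖Rb‖
  have hopt_le : opt B c b ≤ α * linf (R.mulVec b) := h2.2
  nlinarith [hf, hsub, h3, hopt_le, hε, hαpos, linf_nonneg' (R.mulVec (b - B.mulVec f))]
end
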